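/- For n, m ≥ 2, the space of linear maps M(n,m) → M(n,m) equivariant under the action of S_n × S_m (permuting rows and columns independently) has dimension exactly 4, spanned by the identity, row-sum broadcast, column-sum broadcast, and total-sum broadcast maps. -/

import Mathlib

/-- The submodule of linear endomorphisms of `M(n,m) = Fin n → Fin m → ℝ` equivariant
under the action of `S_n × S_m` permuting rows and columns independently. -/
noncomputable def biPermEquivariantEndos (n m : ℕ) :
    Submodule ℝ ((Fin n → Fin m → ℝ) →ₗ[ℝ] (Fin n → Fin m → ℝ)) where
  carrier := {T | ∀ (σ : Equiv.Perm (Fin n)) (τ : Equiv.Perm (Fin m))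
      (M : Fin n → Fin m → ℝ),
    T (fun i j => M (σ⁻¹ i) (τ⁻¹ j)) = fun i j => T M (σ⁻¹ i) (τ⁻¹ j)}
  add_mem' := by
    intro a b ha hb σ τ M
    funext i j
    simp only [LinearMap.add_apply, Pi.add_apply, ha σ τ M, hb σ τ M]
  zero_mem' := by
    intro σ τ M
    funext i j
    simp
  smul_mem' := by
    intro c T hT σ τ M
    funext i j
    simp only [LinearMap.smul_apply, Pi.smul_apply, hT σ τ M]

/-- Identity map. -/
noncomputable def idMap (n m : ℕ) : (Fin n → Fin m → ℝ) →ₗ[ℝ] (Fin n → Fin m → ℝ) :=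
  LinearMap.id

/-- Row-sum broadcast. -/
noncomputable def rowSumMap (n m : ℕ) : (Fin n → Fin m → ℝ) →ₗ[ℝ] (Fin n → Fin m → ℝ) where
  toFun M := fun i _ => ∑ k, M i k
  map_add' M N := by funext i j; simp [Finset.sum_add_distrib]
  map_smul' c M := by funext i j; simp [Finset.mul_sum]

/-- Column-sum broadcast. -/
noncomputable def colSumMap (n m : ℕ) : (Fin n → Fin m → ℝ) →ₗ[ℝ] (Fin n → Fin m → ℝ) where
  toFun M := fun _ j => ∑ k, M k j
  map_add' M N := by funext i j; simp [Finset.sum_add_distrib]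
  map_smul' c M := by funext i j; simp [Finset.mul_sum]

/-- Total-sum broadcast. -/
noncomputable def totalSumMap (n m : ℕ) : (Fin n → Fin m → ℝ) →ₗ[ℝ] (Fin n → Fin m → ℝ) where
  toFun M := fun _ _ => ∑ k, ∑ l, M k l
  map_add' M N := by funext i j; simp [Finset.sum_add_distrib]
  map_smul' c M := by funext i j; simp [Finset.mul_sum]



lemma exists_perm_pair {α : Type*} [DecidableEq α] {i k i' k' : α}
    (h : i ≠ k) (h' : i' ≠ k') : ∃ σ : Equiv.Perm α, σ i = i' ∧ σ k = k' := by
  refine ⟨(Equiv.swap k ((Equiv.swap i i') k')).trans (Equiv.swap i i'), ?_, ?_⟩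
  · have hik : i ≠ Equiv.swap i i' k' := by
      intro he
      apply h'
      have := congrArg (Equiv.swap i i') he
      simpa [Equiv.swap_apply_left] using this
    simp [Equiv.trans_apply, Equiv.swap_apply_of_ne_of_ne h hik, Equiv.swap_apply_left]
  · simp [Equiv.trans_apply, Equiv.swap_apply_left, Equiv.swap_apply_self]

noncomputable def Ebasis {n m : ℕ} (k : Fin n) (l : Fin m) : Fin n → Fin m → ℝ :=
  fun i j => if i = k then (if j = l then 1 else 0) else 0

lemma Ebasis_decomp {n m : ℕ} (M : Fin n → Fin m → ℝ) :
    M = ∑ k, ∑ l, M k l • Ebasis k l := by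
  funext i j
  simp [Ebasis, Finset.sum_apply, mul_ite, Finset.sum_ite_eq, Finset.sum_ite_eq']

lemma Ebasis_shift {n m : ℕ} (σ : Equiv.Perm (Fin n)) (τ : Equiv.Perm (Fin m))
    (k : Fin n) (l : Fin m) :
    (fun i j => Ebasis k l (σ⁻¹ i) (τ⁻¹ j)) = Ebasis (σ k) (τ l) := by
  funext i j
  simp only [Ebasis]
  congr 1
  · rw [eq_iff_iff]; constructor <;> (rintro rfl; simp)
  · congr 1
    rw [eq_iff_iff]; constructor <;> (rintro rfl; simp)

lemma equivariant_shift {n m : ℕ} {T : (Fin n → Fin m → ℝ) →ₗ[ℝ] (Fin n → Fin m → ℝ)}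
    (hT : ∀ (σ : Equiv.Perm (Fin n)) (τ : Equiv.Perm (Fin m)) (M : Fin n → Fin m → ℝ),
      T (fun i j => M (σ⁻¹ i) (τ⁻¹ j)) = fun i j => T M (σ⁻¹ i) (τ⁻¹ j))
    (σ : Equiv.Perm (Fin n)) (τ : Equiv.Perm (Fin m)) (k i : Fin n) (l j : Fin m) :
    T (Ebasis (σ k) (τ l)) (σ i) (τ j) = T (Ebasis k l) i j := by
  have h := hT σ τ (Ebasis k l)
  rw [Ebasis_shift] at h
  rw [h]
  simp

lemma classify {n m : ℕ} {T : (Fin n → Fin m → ℝ) →ₗ[ℝ] (Fin n → Fin m → ℝ)}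
    (hT : ∀ (σ : Equiv.Perm (Fin n)) (τ : Equiv.Perm (Fin m)) (M : Fin n → Fin m → ℝ),
      T (fun i j => M (σ⁻¹ i) (τ⁻¹ j)) = fun i j => T M (σ⁻¹ i) (τ⁻¹ j))
    {x0 x1 : Fin n} {y0 y1 : Fin m} (hx : x0 ≠ x1) (hy : y0 ≠ y1)
    (k i : Fin n) (l j : Fin m) :
    T (Ebasis k l) i j =
      if i = k then (if j = l then T (Ebasis x0 y0) x0 y0 else T (Ebasis x0 y0) x0 y1)
      else (if j = l then T (Ebasis x0 y0) x1 y0 else T (Ebasis x0 y0) x1 y1) := by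
  by_cases hik : i = k <;> by_cases hjl : j = l
  · subst hik; subst hjl
    have h := equivariant_shift hT (Equiv.swap x0 i) (Equiv.swap y0 j) x0 x0 y0 y0
    simpa [Equiv.swap_apply_left] using h
  · subst hik
    obtain ⟨τ, hτ0, hτ1⟩ := exists_perm_pair hy (show l ≠ j from fun h => hjl h.symm)
    have h := equivariant_shift hT (Equiv.swap x0 i) τ x0 x0 y0 y1
    rw [Equiv.swap_apply_left, hτ0, hτ1] at h
    simp [hjl, h]
  · subst hjl
    obtain ⟨σ, hσ0, hσ1⟩ := exists_perm_pair hx (show k ≠ i from fun h => hik h.symm)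
    have h := equivariant_shift hT σ (Equiv.swap y0 j) x0 x1 y0 y0
    rw [Equiv.swap_apply_left, hσ0, hσ1] at h
    simp [hik, h]
  · obtain ⟨σ, hσ0, hσ1⟩ := exists_perm_pair hx (show k ≠ i from fun h => hik h.symm)
    obtain ⟨τ, hτ0, hτ1⟩ := exists_perm_pair hy (show l ≠ j from fun h => hjl h.symm)
    have h := equivariant_shift hT σ τ x0 x1 y0 y1
    rw [hσ0, hσ1, hτ0, hτ1] at h
    simp [hik, hjl, h]

lemma sum_expand {n m : ℕ} (M : Fin n → Fin m → ℝ) (i : Fin n) (j : Fin m)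
    (a b c d : ℝ) :
    ∑ k, ∑ l, M k l *
      (if i = k then (if j = l then a else b) else (if j = l then c else d)) =
    (a - b - c + d) * M i j + (b - d) * (∑ l, M i l) + (c - d) * (∑ k, M k j)
      + d * (∑ k, ∑ l, M k l) := by
  have expand : ∀ (k : Fin n) (l : Fin m), M k l *
      (if i = k then (if j = l then a else b) else (if j = l then c else d)) =
      (a - b - c + d) * (if l = j then (if k = i then M k l else 0) else 0)
      + (b - d) * (if k = i then M k l else 0)
      + (c - d) * (if l = j then M k l else 0)
      + d * M k l := by
    intro k l
    by_cases h1 : i = k <;> by_cases h2 : j = l <;>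
      simp [h1, h2, Ne.symm, eq_comm] <;> ring
  simp_rw [expand, Finset.sum_add_distrib, ← Finset.mul_sum, Finset.sum_ite_eq',
    Finset.mem_univ, if_true, Finset.sum_ite_irrel, Finset.sum_const_zero,
    Finset.sum_ite_eq']
  simp

set_option maxRecDepth 4000 in
lemma mem_span_of_equivariant {n m : ℕ} (hn : 2 ≤ n) (hm : 2 ≤ m)
    {T : (Fin n → Fin m → ℝ) →ₗ[ℝ] (Fin n → Fin m → ℝ)}
    (hT : ∀ (σ : Equiv.Perm (Fin n)) (τ : Equiv.Perm (Fin m)) (M : Fin n → Fin m → ℝ),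
      T (fun i j => M (σ⁻¹ i) (τ⁻¹ j)) = fun i j => T M (σ⁻¹ i) (τ⁻¹ j)) :
    T ∈ Submodule.span ℝ
      ({idMap n m, rowSumMap n m, colSumMap n m, totalSumMap n m} : Set _) := by
  set x0 : Fin n := ⟨0, by omega⟩ with hx0
  set x1 : Fin n := ⟨1, by omega⟩ with hx1
  set y0 : Fin m := ⟨0, by omega⟩ with hy0
  set y1 : Fin m := ⟨1, by omega⟩ with hy1
  have hx : x0 ≠ x1 := by simp [hx0, hx1, Fin.ext_iff]
  have hy : y0 ≠ y1 := by simp [hy0, hy1, Fin.ext_iff]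
  set a := T (Ebasis x0 y0) x0 y0 with ha
  set b := T (Ebasis x0 y0) x0 y1 with hb
  set c := T (Ebasis x0 y0) x1 y0 with hc
  set d := T (Ebasis x0 y0) x1 y1 with hd
  have hrep : T = (a - b - c + d) • idMap n m + (b - d) • rowSumMap n m
      + (c - d) • colSumMap n m + d • totalSumMap n m := by
    apply LinearMap.ext; intro M
    funext i j
    have h1 : T M = ∑ k, ∑ l, M k l • T (Ebasis k l) := by
      conv_lhs => rw [Ebasis_decomp M]
      simp [map_sum, map_smul]
    rw [LinearMap.add_apply, LinearMap.add_apply, LinearMap.add_apply, h1]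
    simp only [Finset.sum_apply, Pi.smul_apply, smul_eq_mul]
    have hclass : ∀ (k i : Fin n) (l j : Fin m), T (Ebasis k l) i j =
        if i = k then (if j = l then a else b) else (if j = l then c else d) :=
      fun k i l j => classify hT hx hy k i l j
    simp_rw [hclass]
    rw [sum_expand]
    simp [idMap, rowSumMap, colSumMap, totalSumMap]
  rw [hrep]
  have m1 : idMap n m ∈ Submodule.span ℝ
      ({idMap n m, rowSumMap n m, colSumMap n m, totalSumMap n m} : Set _) :=
    Submodule.subset_span (by simp)
  have m2 : rowSumMap n m ∈ Submodule.span ℝ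
      ({idMap n m, rowSumMap n m, colSumMap n m, totalSumMap n m} : Set _) :=
    Submodule.subset_span (by simp)
  have m3 : colSumMap n m ∈ Submodule.span ℝ
      ({idMap n m, rowSumMap n m, colSumMap n m, totalSumMap n m} : Set _) :=
    Submodule.subset_span (by simp)
  have m4 : totalSumMap n m ∈ Submodule.span ℝ
      ({idMap n m, rowSumMap n m, colSumMap n m, totalSumMap n m} : Set _) :=
    Submodule.subset_span (by simp)
  exact add_mem (add_mem (add_mem (Submodule.smul_mem _ _ m1) (Submodule.smul_mem _ _ m2))
    (Submodule.smul_mem _ _ m3)) (Submodule.smul_mem _ _ m4)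



lemma gens_mem (n m : ℕ) :
    idMap n m ∈ biPermEquivariantEndos n m ∧
    rowSumMap n m ∈ biPermEquivariantEndos n m ∧
    colSumMap n m ∈ biPermEquivariantEndos n m ∧
    totalSumMap n m ∈ biPermEquivariantEndos n m := by
  refine ⟨fun σ τ M => rfl, fun σ τ M => ?_, fun σ τ M => ?_, fun σ τ M => ?_⟩
  · funext i j
    exact Fintype.sum_equiv τ⁻¹ _ _ (fun k => rfl)
  · funext i j
    exact Fintype.sum_equiv σ⁻¹ _ _ (fun k => rfl)
  · funext i j
    refine Fintype.sum_equiv σ⁻¹ _ _ (fun k => ?_)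
    exact Fintype.sum_equiv τ⁻¹ _ _ (fun l => rfl)

theorem biperm_equivariant_endos_dim_four (n m : ℕ) (hn : 2 ≤ n) (hm : 2 ≤ m) :
    Module.finrank ℝ (biPermEquivariantEndos n m) = 4 ∧
    biPermEquivariantEndos n m =
      Submodule.span ℝ {idMap n m, rowSumMap n m, colSumMap n m, totalSumMap n m} := by
  obtain ⟨g1, g2, g3, g4⟩ := gens_mem n m
  have heq : biPermEquivariantEndos n m =
      Submodule.span ℝ {idMap n m, rowSumMap n m, colSumMap n m, totalSumMap n m} := by
    apply le_antisymm
    · intro T hT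
      exact mem_span_of_equivariant hn hm hT
    · rw [Submodule.span_le]
      rintro T hTmem
      simp only [Set.mem_insert_iff, Set.mem_singleton_iff] at hTmem
      rcases hTmem with rfl | rfl | rfl | rfl
      · exact g1
      · exact g2
      · exact g3
      · exact g4
  refine ⟨?_, heq⟩
  set x0 : Fin n := ⟨0, by omega⟩ with hx0
  set x1 : Fin n := ⟨1, by omega⟩ with hx1
  set y0 : Fin m := ⟨0, by omega⟩ with hy0
  set y1 : Fin m := ⟨1, by omega⟩ with hy1
  have hx : x0 ≠ x1 := by simp [hx0, hx1, Fin.ext_iff]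
  have hy : y0 ≠ y1 := by simp [hy0, hy1, Fin.ext_iff]
  have hli : LinearIndependent ℝ ![idMap n m, rowSumMap n m, colSumMap n m, totalSumMap n m] := by
    rw [Fintype.linearIndependent_iff]
    intro g hg
    have hE : ∀ (p : Fin n) (q : Fin m),
        g 0 * Ebasis x0 y0 p q + g 1 * (∑ l, Ebasis x0 y0 p l)
          + g 2 * (∑ k, Ebasis x0 y0 k q) + g 3 * (∑ k, ∑ l, Ebasis x0 y0 k l) = 0 := by
      intro p q
      have h := congrFun (congrFun (congrArg
        (fun (S : (Fin n → Fin m → ℝ) →ₗ[ℝ] (Fin n → Fin m → ℝ)) => S (Ebasis x0 y0)) hg) p) q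
      simpa [Fin.sum_univ_four, idMap, rowSumMap, colSumMap, totalSumMap] using h
    have erow : ∀ p : Fin n, (∑ l, Ebasis x0 y0 p l) = if p = x0 then (1:ℝ) else 0 := by
      intro p; simp [Ebasis, Finset.sum_ite_eq', apply_ite]
    have ecol : ∀ q : Fin m, (∑ k, Ebasis x0 y0 k q) = if q = y0 then (1:ℝ) else 0 := by
      intro q
      by_cases h : q = y0 <;> simp [Ebasis, h, Finset.sum_ite_eq']
    have etot : (∑ k, ∑ l, Ebasis (m := m) x0 y0 k l) = 1 := by
      simp [erow, Finset.sum_ite_eq']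
    have h11 := hE x0 y0
    have h12 := hE x0 y1
    have h21 := hE x1 y0
    have h22 := hE x1 y1
    simp [Ebasis, erow, ecol, etot, hx.symm, hy.symm, Ne.symm hx, Ne.symm hy, hx, hy]
      at h11 h12 h21 h22
    intro i
    fin_cases i <;> simp <;> linarith
  have hrange : Set.range ![idMap n m, rowSumMap n m, colSumMap n m, totalSumMap n m]
      = {idMap n m, rowSumMap n m, colSumMap n m, totalSumMap n m} := by
    ext S
    simp only [Matrix.range_cons, Matrix.range_empty, Set.union_empty, Set.mem_union, Set.mem_insert_iff,
      Set.mem_singleton_iff]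
  rw [heq, ← hrange, finrank_span_eq_card hli]
  simp
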